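/- arXiv:math-ph/0312033 — 8 statements merged into one kernel-verified Lean document; each statement's English description precedes it below -/
import Mathlib

section
/- The number of Boolean functions on n variables (n ≥ 1) that are both positively and negatively canalizing is exactly 2n. Specifically, such a function is determined by a choice of a variable i ∈ [n] and a choice between f(x) = x_i and f(x) = 1 - x_i. -/
/-!
If `f` is forced to `true` by `x i = s` and forced to `false` by `x j = s'`, then the two
constraints can never hold simultaneously, so `j = i` and `s' = !s`; every input then
satisfies one of them, hence `f x = xor (!s) (x i)`. Conversely each `x ↦ xor b (x i)` is
both positively and negatively canalizing, and distinct pairs `(i, b)` give distinct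
functions, so there are exactly `2 * n` such functions.
-/

namespace Canalizing

variable {ι : Type*}

def IsPosCanalizing (f : (ι → Bool) → Bool) : Prop :=
  ∃ (i : ι) (s : Bool), ∀ x, x i = s → f x = true

def IsNegCanalizing (f : (ι → Bool) → Bool) : Prop :=
  ∃ (j : ι) (s' : Bool), ∀ x, x j = s' → f x = false

def literal (p : ι × Bool) (x : ι → Bool) : Bool :=
  xor p.2 (x p.1)

lemma eq_and_eq_not_of_canalizing {f : (ι → Bool) → Bool} {i j : ι} {s s' : Bool}
    (hpos : ∀ x, x i = s → f x = true) (hneg : ∀ x, x j = s' → f x = false) :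
    j = i ∧ s' = !s := by
  classical
  have hji : j = i := by
    by_contra hji
    have hx := hpos (Function.update (fun _ => s') i s) (Function.update_self ..)
    rw [hneg _ (Function.update_of_ne hji ..)] at hx
    exact Bool.false_ne_true hx
  refine ⟨hji, ?_⟩
  subst hji
  by_contra hs
  have hs' : s' = s := by cases s <;> cases s' <;> simp_all
  have hx := hpos (fun _ => s) rfl
  rw [hneg _ hs'.symm] at hx
  exact Bool.false_ne_true hx

lemma eq_literal_of_canalizing {f : (ι → Bool) → Bool} {i : ι} {s : Bool}
    (hpos : ∀ x, x i = s → f x = true) (hneg : ∀ x, x i = !s → f x = false) :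
    f = literal (i, !s) := by
  funext x
  by_cases hx : x i = s
  · simp [literal, hpos x hx, hx]
  · have hx' : x i = !s := by cases s <;> simpa using hx
    simp [literal, hneg x hx', hx']

lemma literal_isPosCanalizing (p : ι × Bool) : IsPosCanalizing (literal p) :=
  ⟨p.1, !p.2, fun x hx => by simp [literal, hx]⟩

lemma literal_isNegCanalizing (p : ι × Bool) : IsNegCanalizing (literal p) :=
  ⟨p.1, p.2, fun x hx => by simp [literal, hx]⟩

theorem isPosCanalizing_and_isNegCanalizing_iff {f : (ι → Bool) → Bool} :
    IsPosCanalizing f ∧ IsNegCanalizing f ↔ f ∈ Set.range literal := by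
  constructor
  · rintro ⟨⟨i, s, hpos⟩, ⟨j, s', hneg⟩⟩
    obtain ⟨rfl, rfl⟩ := eq_and_eq_not_of_canalizing hpos hneg
    exact ⟨_, (eq_literal_of_canalizing hpos hneg).symm⟩
  · rintro ⟨p, rfl⟩
    exact ⟨literal_isPosCanalizing p, literal_isNegCanalizing p⟩

lemma literal_injective : Function.Injective (literal (ι := ι)) := by
  classical
  rintro ⟨i, b⟩ ⟨j, b'⟩ h
  have hb : b = b' := by simpa [literal] using congrFun h (fun _ => false)
  subst hb
  have hx := congrFun h (Function.update (fun _ => false) i true)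
  by_cases hij : j = i
  · rw [hij]
  · simp [literal, Function.update_of_ne hij] at hx

theorem card_isPosCanalizing_and_isNegCanalizing :
    Nat.card {f : (ι → Bool) → Bool // IsPosCanalizing f ∧ IsNegCanalizing f} =
      2 * Nat.card ι := by
  rw [Nat.card_congr (Equiv.subtypeEquivRight fun _ => isPosCanalizing_and_isNegCanalizing_iff),
    Nat.card_range_of_injective literal_injective, Nat.card_prod,
    Nat.card_eq_fintype_card (α := Bool), Fintype.card_bool, mul_comm]

lemma mem_range_literal_iff {f : (ι → Bool) → Bool} :
    f ∈ Set.range literal ↔ ∃ i, (∀ x, f x = x i) ∨ (∀ x, f x = !(x i)) := by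
  constructor
  · rintro ⟨⟨i, b⟩, rfl⟩
    cases b <;> exact ⟨i, by simp [literal]⟩
  · rintro ⟨i, h | h⟩
    · exact ⟨(i, false), funext fun x => by simp [literal, h]⟩
    · exact ⟨(i, true), funext fun x => by simp [literal, h]⟩

end Canalizing

open Canalizing in
theorem card_both_canalizing_general (n : ℕ) :
    Nat.card {f : (Fin n → Bool) → Bool //
      (∃ (i : Fin n) (s : Bool), ∀ x, x i = s → f x = true) ∧
      (∃ (j : Fin n) (s' : Bool), ∀ x, x j = s' → f x = false)} = 2 * n ∧
    ∀ f : (Fin n → Bool) → Bool,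
      ((∃ (i : Fin n) (s : Bool), ∀ x, x i = s → f x = true) ∧
       (∃ (j : Fin n) (s' : Bool), ∀ x, x j = s' → f x = false)) ↔
      (∃ i : Fin n, (∀ x, f x = x i) ∨ (∀ x, f x = !(x i))) :=
  ⟨(card_isPosCanalizing_and_isNegCanalizing (ι := Fin n)).trans (by rw [Nat.card_fin]),
    fun _ => isPosCanalizing_and_isNegCanalizing_iff.trans mem_range_literal_iff⟩

theorem card_both_canalizing (n : ℕ) (hn : 1 ≤ n) :
    Nat.card {f : (Fin n → Bool) → Bool //
      (∃ (i : Fin n) (s : Bool), ∀ x, x i = s → f x = true) ∧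
      (∃ (j : Fin n) (s' : Bool), ∀ x, x j = s' → f x = false)} = 2 * n ∧
    ∀ f : (Fin n → Bool) → Bool,
      ((∃ (i : Fin n) (s : Bool), ∀ x, x i = s → f x = true) ∧
       (∃ (j : Fin n) (s' : Bool), ∀ x, x j = s' → f x = false)) ↔
      (∃ i : Fin n, (∀ x, f x = x i) ∨ (∀ x, f x = !(x i))) :=
  card_both_canalizing_general n
end

section
/- Let I ⊆ [n] be nonempty. A nonconstant Boolean function f (with f ≠ 1 identically) is positively canalizing on I if and only if it is positively canalizing on {i} for every i ∈ I. That is, PC⁻_I = ⋂_{i ∈ I} PC⁻_{i}. -/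
theorem exists_forall_exists_mem_ne_imp_iff {ι : Type*} {β : ι → Type*} [∀ i, Nonempty (β i)]
    (I : Set ι) (p : (∀ i, β i) → Prop) :
    (∃ σ : ∀ i, β i, ∀ x, (∃ i ∈ I, x i ≠ σ i) → p x) ↔
      ∀ i ∈ I, ∃ s : β i, ∀ x : ∀ i, β i, x i ≠ s → p x := by
  constructor
  · rintro ⟨σ, hσ⟩ i hi
    exact ⟨σ i, fun x hx => hσ x ⟨i, hi, hx⟩⟩
  · intro h
    choose s hs using h
    classical
    refine ⟨fun i => if hi : i ∈ I then s i hi else Classical.arbitrary _, ?_⟩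
    rintro x ⟨i, hi, hx⟩
    exact hs i hi x (by simpa only [dif_pos hi] using hx)

theorem pos_canalizing_on_set_iff_singletons_general (n : ℕ) (f : (Fin n → Bool) → Bool)
    (I : Finset (Fin n)) :
    (∃ σ : Fin n → Bool, ∀ x : Fin n → Bool, (∃ i ∈ I, x i ≠ σ i) → f x = true) ↔
    (∀ i ∈ I, ∃ s : Bool, ∀ x : Fin n → Bool, x i ≠ s → f x = true) :=
  exists_forall_exists_mem_ne_imp_iff (I : Set (Fin n)) fun x => f x = true

theorem pos_canalizing_on_set_iff_singletons (n : ℕ) (f : (Fin n → Bool) → Bool)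
    (hf : f ≠ fun _ => true) (I : Finset (Fin n)) (hI : I.Nonempty) :
    (∃ σ : Fin n → Bool, ∀ x : Fin n → Bool, (∃ i ∈ I, x i ≠ σ i) → f x = true) ↔
    (∀ i ∈ I, ∃ s : Bool, ∀ x : Fin n → Bool, x i ≠ s → f x = true) :=
  pos_canalizing_on_set_iff_singletons_general n f I
end

section
/- For 1 ≤ k ≤ n, the number of nonconstant Boolean functions of n variables that are positively canalizing on the set [k] = {0,...,k-1} equals 2^k · (2^{2^{n-k}} − 1). -/
/-!
If `f` takes the value `1` whenever `x|[k] ≠ σ`, then `f` is determined by `σ` and by its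
restriction to the subcube `x|[k] = σ`, an arbitrary function of the remaining `n - k` variables;
`f` is nonconstant exactly when this restriction is, and then `σ` is recovered from `f` as the
unique pattern on whose subcube `f` can take the value `0`.
-/

open Function

section Canalizing

variable {A B M : Type*} [DecidableEq A] (top : M)

def extendOnFiber (a : A) (g : B → M) (x : A × B) : M :=
  if x.1 = a then g x.2 else top

theorem extendOnFiber_mk_self (a : A) (g : B → M) (b : B) :
    extendOnFiber top a g (a, b) = g b :=
  if_pos rfl

theorem extendOnFiber_of_ne {a : A} (g : B → M) {x : A × B} (hx : x.1 ≠ a) :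
    extendOnFiber top a g x = top :=
  if_neg hx

theorem extendOnFiber_eq_const_iff {a : A} {g : B → M} :
    extendOnFiber top a g = const _ top ↔ g = const B top :=
  ⟨fun h => funext fun b => (extendOnFiber_mk_self top a g b).symm.trans (congrFun h (a, b)),
    fun h => h ▸ funext fun _ => ite_self top⟩

theorem eq_extendOnFiber {f : A × B → M} {a : A} (hf : ∀ x : A × B, x.1 ≠ a → f x = top) :
    f = extendOnFiber top a (fun b => f (a, b)) := by
  funext ⟨a', b⟩
  by_cases ha : a' = a
  · subst ha
    rw [extendOnFiber_mk_self]
  · rw [hf _ ha, extendOnFiber_of_ne top _ ha]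

def extendOnFiberNonconst :
    A × {g : B → M // g ≠ const B top} →
      {f : A × B → M // f ≠ const _ top ∧ ∃ a, ∀ x : A × B, x.1 ≠ a → f x = top} :=
  fun p => ⟨extendOnFiber top p.1 p.2, (extendOnFiber_eq_const_iff top).not.mpr p.2.2,
    p.1, fun _ => extendOnFiber_of_ne top p.2.1⟩

theorem extendOnFiberNonconst_bijective :
    Bijective (extendOnFiberNonconst (A := A) (B := B) top) := by
  constructor
  · rintro ⟨a, g, hg⟩ ⟨a', g', hg'⟩ h
    have hext : extendOnFiber top a g = extendOnFiber top a' g' := congrArg Subtype.val h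
    have ha : a = a' := by
      obtain ⟨b, hb⟩ := Function.ne_iff.mp hg
      by_contra hne
      have := congrFun hext (a, b)
      rw [extendOnFiber_mk_self, extendOnFiber_of_ne top g' hne] at this
      exact hb this
    subst ha
    have hgg : g = g' := funext fun b => by
      simpa only [extendOnFiber_mk_self] using congrFun hext (a, b)
    subst hgg
    rfl
  · rintro ⟨f, hf, a, hfa⟩
    have hg : (fun b => f (a, b)) ≠ const B top := by
      rwa [eq_extendOnFiber top hfa, Ne, extendOnFiber_eq_const_iff] at hf
    exact ⟨⟨a, _, hg⟩, Subtype.ext (eq_extendOnFiber top hfa).symm⟩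

theorem card_nonconst_of_const_off_fiber [Finite B] [Finite M] :
    Nat.card {f : A × B → M // f ≠ const _ top ∧ ∃ a, ∀ x : A × B, x.1 ≠ a → f x = top} =
      Nat.card A * (Nat.card M ^ Nat.card B - 1) := by
  classical
  have : Fintype B := Fintype.ofFinite B
  have : Fintype M := Fintype.ofFinite M
  rw [← Nat.card_congr (Equiv.ofBijective _ (extendOnFiberNonconst_bijective top)),
    Nat.card_prod, ← Nat.card_fun, Nat.card_eq_fintype_card (α := {g : B → M // _}),
    Nat.card_eq_fintype_card (α := B → M)]
  exact congrArg _ (Set.card_ne_eq _)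

end Canalizing

section SplitAlong

variable {ι κ : Type*} (e : κ ↪ ι) (β : Type*) {M : Type*}

open Classical in
noncomputable def piSplitAlong : (ι → β) ≃ (κ → β) × (↥(Set.range e)ᶜ → β) :=
  (Equiv.piEquivPiSubtypeProd (· ∈ Set.range e) fun _ => β).trans
    (((Equiv.ofInjective e e.injective).symm.arrowCongr (Equiv.refl β)).prodCongr (Equiv.refl _))

@[simp]
theorem piSplitAlong_apply_fst (x : ι → β) : (piSplitAlong e β x).1 = x ∘ e := by
  funext i
  simp [piSplitAlong]

theorem card_nonconst_canalizing_along [Finite ι] [Finite β] [Finite M] (top : M) :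
    Nat.card {f : (ι → β) → M // f ≠ (fun _ => top) ∧
      ∃ σ : κ → β, ∀ x : ι → β, (∃ i, x (e i) ≠ σ i) → f x = top} =
      Nat.card β ^ Nat.card κ * (Nat.card M ^ Nat.card β ^ (Nat.card ι - Nat.card κ) - 1) := by
  classical
  have : Finite κ := Finite.of_injective e e.injective
  have hcompl : Nat.card ↥(Set.range e)ᶜ = Nat.card ι - Nat.card κ := by
    rw [Nat.card_coe_set_eq, Set.ncard_compl, Set.ncard_range_of_injective e.injective]
  rw [← hcompl, ← Nat.card_fun, ← Nat.card_fun (α := ↥(Set.range e)ᶜ),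
    ← card_nonconst_of_const_off_fiber top]
  refine Nat.card_congr (((piSplitAlong e β).arrowCongr (Equiv.refl M)).subtypeEquiv fun f => ?_)
  have hconst : f ≠ (fun _ => top) ↔ f ∘ (piSplitAlong e β).symm ≠ const _ top :=
    ((piSplitAlong e β).symm.surjective.injective_comp_right.eq_iff (b := fun _ => top)).not.symm
  have hcan : ∀ σ : κ → β, (∀ x : ι → β, (∃ i, x (e i) ≠ σ i) → f x = top) ↔
      ∀ y, y.1 ≠ σ → f ((piSplitAlong e β).symm y) = top := fun σ => by
    rw [(piSplitAlong e β).symm.forall_congr_left]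
    simp only [Equiv.symm_symm, Equiv.symm_apply_apply, piSplitAlong_apply_fst, Function.ne_iff,
      comp_apply]
  exact and_congr hconst (exists_congr hcan)

end SplitAlong

theorem card_pos_canalizing_on_first_k_general (n k : ℕ) (hkn : k ≤ n) :
    Nat.card {f : (Fin n → Bool) → Bool //
      f ≠ (fun _ => true) ∧
      ∃ σ : Fin k → Bool, ∀ x : Fin n → Bool,
        (∃ i : Fin k, x (Fin.castLE hkn i) ≠ σ i) → f x = true} =
    2 ^ k * (2 ^ 2 ^ (n - k) - 1) := by
  simpa using card_nonconst_canalizing_along (Fin.castLEEmb hkn) Bool true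

theorem card_pos_canalizing_on_first_k (n k : ℕ) (hk1 : 1 ≤ k) (hkn : k ≤ n) :
    Nat.card {f : (Fin n → Bool) → Bool //
      f ≠ (fun _ => true) ∧
      ∃ σ : Fin k → Bool, ∀ x : Fin n → Bool,
        (∃ i : Fin k, x (Fin.castLE hkn i) ≠ σ i) → f x = true} =
    2 ^ k * (2 ^ 2 ^ (n - k) - 1) :=
  card_pos_canalizing_on_first_k_general n k hkn
end

section
/- For 1 ≤ k ≤ n and bias 0 ≤ p ≤ 1, the probability under the Bernoulli(p) product measure on truth tables that a random Boolean function is nonconstant and positively canalizing on [k] equals 2^k · (p^{2^n − 2^{n−k}} − p^{2^n}). -/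
open scoped Classical

noncomputable def prBias {n : ℕ} (p : ℝ) (f : (Fin n → Bool) → Bool) : ℝ :=
  p ^ (Finset.univ.filter (fun x : Fin n → Bool => f x = true)).card *
  (1 - p) ^ (Finset.univ.filter (fun x : Fin n → Bool => f x = false)).card

/-!
Let `C_σ` be the subcube of inputs that agree with `σ` on the first `k` coordinates; `f` is
canalizing with `σ` exactly when `f = 1` off `C_σ`. Distinct subcubes are disjoint, so a
nonconstant `f` is canalizing with at most one `σ`, and the sum splits into `2^k` sums, one
for each `σ`. For a fixed `σ` the weight of a function is a product over the inputs, so the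
sum over all `f` with `f = 1` off `C_σ` factors. Each input off `C_σ` contributes `p`, and each
input in `C_σ` contributes `p + (1 - p) = 1`. This gives `p^(2^n - 2^(n-k))`, and removing the
constant function subtracts `p^(2^n)`.
-/

open Finset Function

theorem sum_ite_ne_and_eq_sub {β M : Type*} [Fintype β] [DecidableEq β] [AddCommGroup M]
    {P : β → Prop} [DecidablePred P] {a : β} (ha : P a) (g : β → M) :
    ∑ b, (if b ≠ a ∧ P b then g b else 0) = ∑ b, (if P b then g b else 0) - g a := by
  rw [← sum_filter, ← sum_filter, ← sum_erase_eq_sub (by simpa using ha)]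
  congr 1
  ext b
  simp [and_comm]

section BooleanFunctions

theorem eq_const_true_of_disjoint {α : Type*} {s t : Finset α} (hst : Disjoint s t)
    {f : α → Bool} (hs : ∀ x ∉ s, f x = true) (ht : ∀ x ∉ t, f x = true) :
    f = fun _ => true := by
  funext x
  by_cases hx : x ∈ s
  · exact ht x (disjoint_left.1 hst hx)
  · exact hs x hx

variable {α : Type*} [Fintype α] [DecidableEq α]

theorem sum_prod_of_forall_notMem_eq_true {R : Type*} [CommSemiring R] (w : Bool → R)
    (s : Finset α) :
    ∑ f : α → Bool, (if ∀ x ∉ s, f x = true then ∏ x, w (f x) else 0) =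
      (w true + w false) ^ #s * w true ^ #sᶜ := by
  -- Folding the constraint into the weights makes every summand a product, so the sum factors.
  set W : α → Bool → R := fun x b => if x ∉ s ∧ b = false then 0 else w b
  have hW (f : α → Bool) :
      (if ∀ x ∉ s, f x = true then ∏ x, w (f x) else 0) = ∏ x, W x (f x) := by
    split_ifs with hf
    · refine prod_congr rfl fun x _ => ?_
      by_cases hx : x ∈ s <;> simp [W, hx, hf]
    · push Not at hf
      obtain ⟨x, hx, hfx⟩ := hf
      exact (prod_eq_zero (mem_univ x) (by simp [W, hx, hfx])).symm
  calc _ = ∑ f : α → Bool, ∏ x, W x (f x) := sum_congr rfl fun f _ => hW f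
    _ = ∏ x, ∑ b, W x b := (Fintype.prod_sum W).symm
    _ = ∏ x, if x ∈ s then w true + w false else w true :=
        prod_congr rfl fun x _ => by by_cases hx : x ∈ s <;> simp [W, hx]
    _ = _ := by
        rw [prod_ite, prod_const, prod_const, filter_mem_eq_inter, univ_inter,
          filter_notMem_eq_sdiff, ← compl_eq_univ_sdiff]

theorem sum_ite_ne_true_and_exists_eq_sum {ι M : Type*} [Fintype ι] [AddCommMonoid M]
    {S : ι → Finset α} (hS : Pairwise (Disjoint on S)) (g : (α → Bool) → M) :
    ∑ f : α → Bool, (if f ≠ (fun _ => true) ∧ ∃ i, ∀ x ∉ S i, f x = true then g f else 0) =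
      ∑ i, ∑ f : α → Bool,
        if f ≠ (fun _ => true) ∧ ∀ x ∉ S i, f x = true then g f else 0 := by
  rw [sum_comm]
  refine sum_congr rfl fun f _ => ?_
  rw [Fintype.sum_ite_eq_ite_exists]
  · simp only [exists_and_left]
  rintro i j ⟨hf, hi⟩ ⟨-, hj⟩
  by_contra hij
  exact hf (eq_const_true_of_disjoint (hS hij) hi hj)

end BooleanFunctions

section Subcube

variable {β : Type*} [Fintype β] [DecidableEq β] {n k : ℕ}

def subcube (hkn : k ≤ n) (σ : Fin k → β) : Finset (Fin n → β) :=
  {x | ∀ i, x (Fin.castLE hkn i) = σ i}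

theorem mem_subcube {hkn : k ≤ n} {σ : Fin k → β} {x : Fin n → β} :
    x ∈ subcube hkn σ ↔ ∀ i, x (Fin.castLE hkn i) = σ i := by
  simp [subcube]

theorem card_subcube (hkn : k ≤ n) (σ : Fin k → β) :
    #(subcube hkn σ) = Fintype.card β ^ (n - k) := by
  obtain ⟨m, rfl⟩ := Nat.exists_eq_add_of_le hkn
  let e : {x : Fin (k + m) → β // ∀ i, x (Fin.castAdd m i) = σ i} ≃ (Fin m → β) :=
    { toFun x j := x.1 (Fin.natAdd k j)
      invFun y := ⟨Fin.append σ y, Fin.append_left σ y⟩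
      left_inv x := Subtype.ext <| funext fun j => Fin.addCases (by simp [x.2]) (by simp) j
      right_inv y := funext (Fin.append_right σ y) }
  calc #(subcube hkn σ)
      = Fintype.card {x : Fin (k + m) → β // ∀ i, x (Fin.castAdd m i) = σ i} := by
        rw [Fintype.card_subtype]
        rfl
    _ = Fintype.card β ^ (k + m - k) := by simp [Fintype.card_congr e]

theorem pairwise_disjoint_subcube (hkn : k ≤ n) :
    Pairwise fun σ τ : Fin k → β => Disjoint (subcube hkn σ) (subcube hkn τ) := by
  intro σ τ hστ
  refine disjoint_left.2 fun x hσ hτ => hστ (funext fun i => ?_)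
  rw [mem_subcube] at hσ hτ
  rw [← hσ i, hτ i]

end Subcube

theorem prBias_eq_prod {n : ℕ} (p : ℝ) (f : (Fin n → Bool) → Bool) :
    prBias p f = ∏ x, if f x = true then p else 1 - p := by
  rw [prBias, prod_ite, prod_const, prod_const]
  simp [Bool.not_eq_true]

theorem prBias_const_true {n : ℕ} (p : ℝ) :
    prBias p (fun _ : Fin n → Bool => true) = p ^ 2 ^ n := by
  simp [prBias]

theorem sum_prBias_of_forall_notMem_eq_true {n : ℕ} (p : ℝ) (s : Finset (Fin n → Bool)) :
    ∑ f, (if ∀ x ∉ s, f x = true then prBias p f else 0) = p ^ (2 ^ n - #s) := by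
  simp only [prBias_eq_prod]
  convert sum_prod_of_forall_notMem_eq_true (fun b => if b = true then p else 1 - p) s using 1
  simp [card_compl]

theorem prob_pos_canalizing_on_first_k_general (n k : ℕ) (hkn : k ≤ n)
    (p : ℝ) :
    (∑ f : (Fin n → Bool) → Bool,
      if f ≠ (fun _ => true) ∧
         ∃ σ : Fin k → Bool, ∀ x : Fin n → Bool,
           (∃ i : Fin k, x (Fin.castLE hkn i) ≠ σ i) → f x = true
       then prBias p f else 0) =
    2 ^ k * (p ^ (2 ^ n - 2 ^ (n - k)) - p ^ 2 ^ n) := by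
  have hcanalizing (σ : Fin k → Bool) (f : (Fin n → Bool) → Bool) :
      (∀ x, (∃ i, x (Fin.castLE hkn i) ≠ σ i) → f x = true) ↔
        ∀ x ∉ subcube hkn σ, f x = true := by
    simp [mem_subcube]
  have hσ (σ : Fin k → Bool) :
      ∑ f, (if f ≠ (fun _ => true) ∧ ∀ x ∉ subcube hkn σ, f x = true then prBias p f else 0) =
        p ^ (2 ^ n - 2 ^ (n - k)) - p ^ 2 ^ n := by
    rw [sum_ite_ne_and_eq_sub (fun _ _ => rfl), sum_prBias_of_forall_notMem_eq_true,
      card_subcube, prBias_const_true, Fintype.card_bool]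
  simp only [hcanalizing]
  rw [sum_ite_ne_true_and_exists_eq_sum (pairwise_disjoint_subcube hkn)]
  simp [hσ, mul_sub]

theorem prob_pos_canalizing_on_first_k (n k : ℕ) (hk1 : 1 ≤ k) (hkn : k ≤ n)
    (p : ℝ) (hp0 : 0 ≤ p) (hp1 : p ≤ 1) :
    (∑ f : (Fin n → Bool) → Bool,
      if f ≠ (fun _ => true) ∧
         ∃ σ : Fin k → Bool, ∀ x : Fin n → Bool,
           (∃ i : Fin k, x (Fin.castLE hkn i) ≠ σ i) → f x = true
       then prBias p f else 0) =
    2 ^ k * (p ^ (2 ^ n - 2 ^ (n - k)) - p ^ 2 ^ n) :=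
  prob_pos_canalizing_on_first_k_general n k hkn p
end

section
/- The probability under bias p that a random Boolean function of n variables is positively canalizing and nonconstant satisfies the inclusion-exclusion formula: Pr_p(PC⁻) = Σ_{k=1}^{n} (−1)^{k+1} · C(n,k) · 2^k · (p^{2^n − 2^{n−k}} − p^{2^n}). -/
/-
For `f ≠ 1` and a variable `i`, `f` cannot be identically `1` on both half-cubes `{x_i = 0}` and
`{x_i = 1}`, so `1 - [f ≡ 1 on x_i = 0] - [f ≡ 1 on x_i = 1]` is the indicator that `f` is not
positively canalizing in `i`, and the product of these factors over all `i` is the indicator that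
`f` is not positively canalizing. Expanding the product over partial assignments `h` gives a signed
sum of indicators that `f ≡ 1` on the union of the half-cubes `{x_i = h i}`. A union of `k` such
half-cubes has `2^n - 2^(n-k)` points, hence probability `p^(2^n - 2^(n-k))`, and `C(n,k) 2^k`
partial assignments fix `k` variables. For the constant function `1` the product is `(-1)^n`,
which produces the `p^(2^n)` correction.
-/

open scoped Classical

open Finset

variable {ι β α : Type*}

/- A partial assignment `h : ι → Option β` fixes the coordinate `i` to `s` when `h i = some s`;
`halfCubeUnion h` is the union of the half-cubes `{x | x i = s}` it selects. -/
def assignedVars [Fintype ι] (h : ι → Option β) : Finset ι := univ.filter fun i => (h i).isSome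

def halfCubeUnion [Fintype ι] [DecidableEq ι] [Fintype β] [DecidableEq β] (h : ι → Option β) :
    Finset (ι → β) :=
  univ.filter fun x => ∃ i, h i = some (x i)

def PosCanalizingAt (f : (ι → β) → Bool) (i : ι) (s : β) : Prop :=
  ∀ x : ι → β, x i = s → f x = true

noncomputable def posCanalizingProd {R : Type*} [CommRing R] [Fintype ι] [Fintype β]
    (f : (ι → β) → Bool) : R :=
  ∏ i, (1 - ∑ s, if PosCanalizingAt f i s then 1 else 0)

theorem card_filter_assignedVars_eq [Fintype ι] [DecidableEq ι] [Fintype β] (D : Finset ι) :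
    #{h : ι → Option β | assignedVars h = D} = Fintype.card β ^ #D := by
  have hpi : ({h : ι → Option β | assignedVars h = D} : Finset _) =
      Fintype.piFinset fun i => if i ∈ D then univ.map .some else {none} := by
    ext h
    simp only [assignedVars, Fintype.mem_piFinset, Finset.ext_iff, mem_filter, mem_univ, true_and]
    refine forall_congr' fun i => ?_
    split_ifs with hi <;> cases h i <;> simp [hi]
  rw [hpi, Fintype.card_piFinset]
  simp [apply_ite Finset.card, prod_ite_mem]

theorem sum_apply_card_assignedVars [Fintype ι] [DecidableEq ι] [Fintype β] {M : Type*}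
    [AddCommMonoid M] (g : ℕ → M) :
    ∑ h : ι → Option β, g #(assignedVars h) =
      ∑ k ∈ range (Fintype.card ι + 1), ((Fintype.card ι).choose k * Fintype.card β ^ k) • g k := by
  rw [← sum_fiberwise_of_maps_to (t := univ.powerset) (g := assignedVars)
    (fun h _ => mem_powerset.2 (subset_univ _))]
  calc ∑ D ∈ univ.powerset, ∑ h with assignedVars h = D, g #(assignedVars h)
      _ = ∑ D ∈ (univ : Finset ι).powerset, Fintype.card β ^ #D • g #D := by
        refine sum_congr rfl fun D _ => ?_
        rw [sum_congr rfl fun h hh => by rw [(mem_filter.1 hh).2], sum_const,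
          card_filter_assignedVars_eq]
      _ = _ := by
        rw [sum_powerset_apply_card (fun k => Fintype.card β ^ k • g k), card_univ]
        simp only [mul_smul]

theorem card_compl_halfCubeUnion [Fintype ι] [DecidableEq ι] [Fintype β] [DecidableEq β]
    (h : ι → Option β) :
    #(halfCubeUnion h)ᶜ =
      (Fintype.card β - 1) ^ #(assignedVars h) *
        Fintype.card β ^ (Fintype.card ι - #(assignedVars h)) := by
  have hpi : (halfCubeUnion h)ᶜ = Fintype.piFinset fun i => {b | h i ≠ some b} := by
    ext x
    simp [halfCubeUnion]
  have hfib (i : ι) : #{b | h i ≠ some b} =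
      if (h i).isSome then Fintype.card β - 1 else Fintype.card β := by
    cases hi : h i with
    | none => simp
    | some c => simp [filter_not, filter_eq, card_univ_sdiff]
  rw [hpi, Fintype.card_piFinset]
  simp only [hfib, prod_ite, prod_const]
  rw [← card_compl, assignedVars, compl_filter]

theorem card_halfCubeUnion [Fintype ι] [DecidableEq ι] (h : ι → Option Bool) :
    #(halfCubeUnion h) = 2 ^ Fintype.card ι - 2 ^ (Fintype.card ι - #(assignedVars h)) := by
  have hsplit := card_compl_add_card (halfCubeUnion h)
  rw [card_compl_halfCubeUnion, Fintype.card_fun, Fintype.card_bool] at hsplit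
  norm_num at hsplit
  exact Nat.eq_sub_of_add_eq' hsplit

def bernoulliWeight {R : Type*} [CommRing R] [Fintype α] (p : R) (f : α → Bool) : R :=
  ∏ x, if f x then p else 1 - p

theorem sum_ite_forall_mem_mul_bernoulliWeight {R : Type*} [CommRing R] [Fintype α]
    [DecidableEq α] (p : R) (F : Finset α) :
    ∑ f : α → Bool, (if ∀ x ∈ F, f x = true then 1 else 0) * bernoulliWeight p f = p ^ #F := by
  have hprod (f : α → Bool) :
      (if ∀ x ∈ F, f x = true then 1 else 0) * bernoulliWeight p f =
        ∏ x, (if f x then p else if x ∈ F then 0 else 1 - p) := by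
    rw [boole_mul, bernoulliWeight]
    split_ifs with hf
    · refine prod_congr rfl fun x _ => ?_
      by_cases hx : f x
      · simp [hx]
      · simp [hx, show x ∉ F from fun hxF => hx (hf x hxF)]
    · push Not at hf
      obtain ⟨x, hxF, hfx⟩ := hf
      exact (prod_eq_zero (mem_univ x) (by simp [hfx, hxF])).symm
  have hfactor (x : α) : ∑ b : Bool, (if b then p else if x ∈ F then 0 else 1 - p) =
      if x ∈ F then p else 1 := by
    by_cases hx : x ∈ F <;> simp [hx]
  rw [sum_congr rfl fun f _ => hprod f,
    ← Fintype.prod_sum fun x (b : Bool) => if b then p else if x ∈ F then 0 else 1 - p]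
  simp only [hfactor, prod_ite_mem, univ_inter, prod_const]

theorem sum_bernoulliWeight {R : Type*} [CommRing R] [Fintype α] [DecidableEq α] (p : R) :
    ∑ f : α → Bool, bernoulliWeight p f = 1 := by
  simpa using sum_ite_forall_mem_mul_bernoulliWeight p (∅ : Finset α)

theorem prBias_eq_bernoulliWeight {n : ℕ} (p : ℝ) (f : (Fin n → Bool) → Bool) :
    prBias p f = bernoulliWeight p f := by
  rw [bernoulliWeight, prod_ite, prod_const, prod_const, prBias]
  simp

theorem forall_mem_halfCubeUnion_iff [Fintype ι] [DecidableEq ι] [Fintype β] [DecidableEq β]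
    (f : (ι → β) → Bool) (h : ι → Option β) :
    (∀ x ∈ halfCubeUnion h, f x = true) ↔ ∀ i, ∀ s ∈ h i, PosCanalizingAt f i s := by
  simp only [halfCubeUnion, mem_filter, mem_univ, true_and, forall_exists_index, PosCanalizingAt,
    Option.mem_def]
  constructor
  · rintro H i _ hs x rfl
    exact H x i hs
  · rintro H x i hi
    exact H i _ hi x rfl

theorem posCanalizingProd_eq_sum [Fintype ι] [DecidableEq ι] [Fintype β] [DecidableEq β]
    {R : Type*} [CommRing R] (f : (ι → β) → Bool) :
    posCanalizingProd f =
      ∑ h : ι → Option β,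
        (-1 : R) ^ #(assignedVars h) * (if ∀ x ∈ halfCubeUnion h, f x = true then 1 else 0) := by
  set w : ι → Option β → R := fun i c => c.elim 1 fun s => -if PosCanalizingAt f i s then 1 else 0
  have hfactor (i : ι) : 1 - ∑ s, (if PosCanalizingAt f i s then 1 else 0) = ∑ c, w i c := by
    simp [w, Fintype.sum_option, sub_eq_add_neg, sum_neg_distrib]
  have hw (i : ι) (c : Option β) : w i c =
      (if c.isSome then -1 else 1) * if ∀ s ∈ c, PosCanalizingAt f i s then 1 else 0 := by
    cases c with
    | none => simp [w]
    | some s =>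
      have hc : (∀ t ∈ some s, PosCanalizingAt f i t) ↔ PosCanalizingAt f i s := by simp
      by_cases hs : PosCanalizingAt f i s
      · rw [if_pos (hc.2 hs)]
        simp [w, hs]
      · rw [if_neg (mt hc.1 hs)]
        simp [w, hs]
  have hterm (h : ι → Option β) : ∏ i, w i (h i) =
      (-1 : R) ^ #(assignedVars h) * (if ∀ x ∈ halfCubeUnion h, f x = true then 1 else 0) := by
    simp only [hw, prod_mul_distrib, ← prod_filter, prod_const, prod_boole, mem_univ, true_imp_iff,
      forall_mem_halfCubeUnion_iff]
    rfl
  simp only [posCanalizingProd, hfactor, Fintype.prod_sum, hterm]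

theorem posCanalizingProd_of_ne [Fintype ι] {R : Type*} [CommRing R]
    {f : (ι → Bool) → Bool} (hf : f ≠ fun _ => true) :
    posCanalizingProd f =
      if ∃ i s, PosCanalizingAt f i s then (0 : R) else 1 := by
  have hfactor (i : ι) : 1 - ∑ s, (if PosCanalizingAt f i s then 1 else 0) =
      if ∃ s, PosCanalizingAt f i s then (0 : R) else 1 := by
    have hboth : ¬ (PosCanalizingAt f i false ∧ PosCanalizingAt f i true) := fun ⟨h0, h1⟩ =>
      hf <| funext fun x => by cases hx : x i; exacts [h0 x hx, h1 x hx]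
    rw [Fintype.sum_bool]
    by_cases h0 : PosCanalizingAt f i false <;> by_cases h1 : PosCanalizingAt f i true <;>
      simp_all
  simp only [posCanalizingProd, hfactor]
  by_cases hex : ∃ i s, PosCanalizingAt f i s
  · obtain ⟨i, s, hs⟩ := hex
    rw [if_pos ⟨i, s, hs⟩]
    exact prod_eq_zero (mem_univ i) (if_pos ⟨s, hs⟩)
  · rw [if_neg hex]
    exact prod_eq_one fun i _ => if_neg fun ⟨s, hs⟩ => hex ⟨i, s, hs⟩

theorem posCanalizingProd_const_true [Fintype ι] {R : Type*} [CommRing R] :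
    posCanalizingProd (fun _ : ι → Bool => true) = (-1 : R) ^ Fintype.card ι := by
  have hall (i : ι) (s : Bool) : PosCanalizingAt (fun _ : ι → Bool => true) i s := fun _ _ => rfl
  norm_num [posCanalizingProd, hall]

theorem sum_posCanalizingProd_mul_bernoulliWeight [Fintype ι] [DecidableEq ι]
    {R : Type*} [CommRing R] (p : R) :
    ∑ f : (ι → Bool) → Bool, posCanalizingProd f * bernoulliWeight p f =
      ∑ k ∈ range (Fintype.card ι + 1), (Fintype.card ι).choose k * 2 ^ k *
        ((-1) ^ k * p ^ (2 ^ Fintype.card ι - 2 ^ (Fintype.card ι - k))) := by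
  simp only [posCanalizingProd_eq_sum, sum_mul]
  rw [sum_comm]
  simp only [mul_assoc, ← mul_sum, sum_ite_forall_mem_mul_bernoulliWeight, card_halfCubeUnion]
  rw [sum_apply_card_assignedVars fun k =>
    (-1 : R) ^ k * p ^ (2 ^ Fintype.card ι - 2 ^ (Fintype.card ι - k))]
  simp [nsmul_eq_mul, mul_assoc]

theorem ite_ne_const_and_exists_posCanalizingAt [Fintype ι] {R : Type*} [CommRing R]
    (f : (ι → Bool) → Bool) :
    (if f ≠ (fun _ => true) ∧ ∃ i s, PosCanalizingAt f i s then 1 else 0 : R) =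
      1 - posCanalizingProd f - if f = (fun _ => true) then 1 - (-1) ^ Fintype.card ι else 0 := by
  by_cases hf : f = fun _ => true
  · subst hf
    rw [posCanalizingProd_const_true, if_neg fun h => h.1 rfl, if_pos rfl]
    ring
  · rw [posCanalizingProd_of_ne hf, if_neg hf, sub_zero]
    by_cases hex : ∃ i s, PosCanalizingAt f i s
    · rw [if_pos ⟨hf, hex⟩, if_pos hex, sub_zero]
    · rw [if_neg fun h => hex h.2, if_neg hex, sub_self]

theorem bernoulliWeight_const_true {R : Type*} [CommRing R] [Fintype α] (p : R) :
    bernoulliWeight p (fun _ : α => true) = p ^ Fintype.card α := by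
  simp [bernoulliWeight]

theorem sum_Icc_neg_one_pow_succ_mul_choose_mul_two_pow {R : Type*} [CommRing R] (n : ℕ)
    (a : ℕ → R) (ha : a 0 = 1) (q : R) :
    ∑ k ∈ Icc 1 n, (-1) ^ (k + 1) * n.choose k * 2 ^ k * (a k - q) =
      1 - ∑ k ∈ range (n + 1), n.choose k * 2 ^ k * ((-1) ^ k * a k) - (1 - (-1) ^ n) * q := by
  have hsplit (g : ℕ → R) : ∑ k ∈ range (n + 1), g k = g 0 + ∑ k ∈ Icc 1 n, g k := by
    rw [range_eq_Ico, sum_eq_sum_Ico_succ_bot n.succ_pos, zero_add, Nat.succ_eq_add_one,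
      Ico_add_one_right_eq_Icc]
  have hbinom : ∑ k ∈ range (n + 1), (n.choose k : R) * 2 ^ k * (-1) ^ k = (-1) ^ n := by
    have := add_pow (-2 : R) 1 n
    norm_num at this
    rw [this]
    refine sum_congr rfl fun k _ => ?_
    rw [show (-2 : R) = -1 * 2 by norm_num, mul_pow]
    ring
  have hpull : ∑ k ∈ Icc 1 n, (-1) ^ (k + 1) * n.choose k * 2 ^ k * (a k - q) =
      q * ∑ k ∈ Icc 1 n, (n.choose k : R) * 2 ^ k * (-1) ^ k -
        ∑ k ∈ Icc 1 n, n.choose k * 2 ^ k * ((-1) ^ k * a k) := by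
    rw [mul_sum, ← sum_sub_distrib]
    exact sum_congr rfl fun k _ => by ring
  rw [hsplit] at hbinom
  rw [hsplit, ha, hpull]
  simp only [Nat.choose_zero_right, Nat.cast_one, pow_zero, one_mul] at hbinom ⊢
  linear_combination q * hbinom

theorem prob_pos_canalizing_general (n : ℕ) (p : ℝ) :
    (∑ f : (Fin n → Bool) → Bool,
      if f ≠ (fun _ => true) ∧
         ∃ (i : Fin n) (s : Bool), ∀ x : Fin n → Bool, x i = s → f x = true
       then prBias p f else 0) =
    ∑ k ∈ Finset.Icc 1 n,
      (-1 : ℝ) ^ (k + 1) * (n.choose k) * 2 ^ k *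
        (p ^ (2 ^ n - 2 ^ (n - k)) - p ^ 2 ^ n) := by
  have hindicator (f : (Fin n → Bool) → Bool) :
      (if f ≠ (fun _ => true) ∧ ∃ (i : Fin n) (s : Bool), ∀ x : Fin n → Bool, x i = s → f x = true
        then prBias p f else 0) =
      (1 - posCanalizingProd f - if f = (fun _ => true) then 1 - (-1) ^ n else 0) *
        bernoulliWeight p f := by
    rw [← boole_mul, prBias_eq_bernoulliWeight]
    congr 1
    -- the two sides differ only in `Decidable` instances and in `Fintype.card (Fin n) = n`
    convert ite_ne_const_and_exists_posCanalizingAt (R := ℝ) f using 3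
    all_goals first | exact Iff.rfl | simp
  rw [sum_congr rfl fun f _ => hindicator f]
  simp only [sub_mul, one_mul, sum_sub_distrib, sum_bernoulliWeight,
    sum_posCanalizingProd_mul_bernoulliWeight, ite_mul, zero_mul, sum_ite_eq',
    mem_univ, if_true, bernoulliWeight_const_true, Fintype.card_fin, Fintype.card_fun,
    Fintype.card_bool]
  rw [sum_Icc_neg_one_pow_succ_mul_choose_mul_two_pow n (fun k => p ^ (2 ^ n - 2 ^ (n - k)))
    (by simp)]
  ring

theorem prob_pos_canalizing (n : ℕ) (hn : 1 ≤ n) (p : ℝ) (hp0 : 0 ≤ p) (hp1 : p ≤ 1) :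
    (∑ f : (Fin n → Bool) → Bool,
      if f ≠ (fun _ => true) ∧
         ∃ (i : Fin n) (s : Bool), ∀ x : Fin n → Bool, x i = s → f x = true
       then prBias p f else 0) =
    ∑ k ∈ Finset.Icc 1 n,
      (-1 : ℝ) ^ (k + 1) * (n.choose k) * 2 ^ k *
        (p ^ (2 ^ n - 2 ^ (n - k)) - p ^ 2 ^ n) :=
  prob_pos_canalizing_general n p
end

section
/- Define S_k = C(n,k) · 2^{k+1} · 2^{2^{n−k}} for 1 ≤ k ≤ n. Then for all 1 ≤ k < n, S_k > S_{k+1}. -/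
/-!
Put `j = n - k ≥ 1`. From `C(n, k+1) (k+1) = C(n, k) j` and `k + 1 ≥ 2` the ratio `S_{k+1} / S_k`
is at most `j / 2^{2^{j-1}}`, and `j < 2^{2^{j-1}}` since a double exponential outgrows the identity.
-/

theorem succ_lt_two_pow_two_pow (j : ℕ) : j + 1 < 2 ^ 2 ^ j :=
  calc j + 1 ≤ 2 ^ j := Nat.lt_two_pow_self
    _ < 2 ^ 2 ^ j := Nat.lt_two_pow_self

theorem two_mul_choose_succ_le {n k : ℕ} (hk : 1 ≤ k) :
    2 * n.choose (k + 1) ≤ n.choose k * (n - k) :=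
  calc 2 * n.choose (k + 1) ≤ n.choose (k + 1) * (k + 1) := by rw [mul_comm]; gcongr; omega
    _ = n.choose k * (n - k) := Nat.choose_succ_right_eq n k

theorem S_strictly_decreasing_general (n : ℕ) (k : ℕ) (hk1 : 1 ≤ k) (hkn : k < n) :
    n.choose (k + 1) * 2 ^ (k + 2) * 2 ^ 2 ^ (n - (k + 1)) <
      n.choose k * 2 ^ (k + 1) * 2 ^ 2 ^ (n - k) := by
  obtain ⟨m, hm⟩ : ∃ m, n - k = m + 1 := ⟨n - (k + 1), by omega⟩
  have hm' : n - (k + 1) = m := by omega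
  have hchoose : 0 < n.choose k := Nat.choose_pos hkn.le
  rw [hm', hm]
  calc n.choose (k + 1) * 2 ^ (k + 2) * 2 ^ 2 ^ m
        = 2 * n.choose (k + 1) * (2 ^ (k + 1) * 2 ^ 2 ^ m) := by ring
    _ ≤ n.choose k * (m + 1) * (2 ^ (k + 1) * 2 ^ 2 ^ m) := by
        rw [← hm]; exact Nat.mul_le_mul_right _ (two_mul_choose_succ_le hk1)
    _ < n.choose k * 2 ^ 2 ^ m * (2 ^ (k + 1) * 2 ^ 2 ^ m) := by
        gcongr; exact succ_lt_two_pow_two_pow m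
    _ = n.choose k * 2 ^ (k + 1) * 2 ^ 2 ^ (m + 1) := by ring

theorem S_strictly_decreasing (n : ℕ) (hn : 2 ≤ n) (k : ℕ) (hk1 : 1 ≤ k) (hkn : k < n) :
    n.choose (k + 1) * 2 ^ (k + 2) * 2 ^ 2 ^ (n - (k + 1)) <
      n.choose k * 2 ^ (k + 1) * 2 ^ 2 ^ (n - k) :=
  S_strictly_decreasing_general n k hk1 hkn
end

section
/- The number of canalizing Boolean functions of n variables is asymptotic to 4n · 2^{2^{n−1}} as n → ∞; i.e., the ratio |C_n| / (4n·2^{2^{n−1}}) tends to 1. In particular, |C_n| ≤ 4n·2^{2^{n−1}} for all n ≥ 2. -/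
/-!
The canalizing functions form the union of the `4n` sets `A(i,s,v)` of functions equal to `v` on
the half-cube `x_i = s`, each of size `2^(2^(n-1))`. The union bound gives the upper bound, and the
second Bonferroni inequality gives the lower bound up to `(4n)^2` times the largest pairwise
intersection. Two distinct sets `A(i,s,v)` share at most `2^(2^(n-2))` functions, since a common
member is determined by its values on the quarter-cube `x_i ≠ s, x_j ≠ s'`; so the relative error
is at most `4n / 2^(2^(n-2))`, which tends to `0`.
-/

open Filter Finset

namespace Finset

variable {α β ι : Type*} [DecidableEq α]

theorem sum_card_le_card_biUnion_add [DecidableEq ι] (s : Finset ι) (B : ι → Finset α) :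
    ∑ i ∈ s, #(B i) ≤ #(s.biUnion B) + ∑ i ∈ s, ∑ j ∈ s.erase i, #(B i ∩ B j) := by
  induction s using Finset.induction_on with
  | empty => simp
  | insert a s ha ih =>
    have hinter : #(B a ∩ s.biUnion B) ≤ ∑ j ∈ s, #(B a ∩ B j) := by
      rw [inter_biUnion]; exact card_biUnion_le
    have hpairs : ∑ i ∈ s, ∑ j ∈ s.erase i, #(B i ∩ B j) ≤
        ∑ i ∈ s, ∑ j ∈ (insert a s).erase i, #(B i ∩ B j) :=
      sum_le_sum fun i _ => sum_le_sum_of_subset (erase_subset_erase i (subset_insert a s))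
    -- `#(B a) + #U = #(B a ∪ U) + #(B a ∩ U)`, and `B a ∩ U` is covered by the `B a ∩ B j`.
    have := card_union_add_card_inter (B a) (s.biUnion B)
    rw [sum_insert ha, sum_insert ha, biUnion_insert, erase_insert ha]
    omega

theorem card_le_pow_of_eqOn_compl [Fintype α] [Fintype β] (F : Finset (α → β)) (S : Finset α)
    (h : ∀ f ∈ F, ∀ g ∈ F, Set.EqOn f g (↑S)ᶜ) : #F ≤ Fintype.card β ^ #S := by
  calc #F ≤ #(univ : Finset (S → β)) :=
        card_le_card_of_injOn (fun f x => f x) (fun _ _ => mem_coe.2 (mem_univ _))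
          fun f hf g hg hfg => funext fun x =>
            if hx : x ∈ S then congrFun hfg ⟨x, hx⟩ else h f hf g hg hx
    _ = Fintype.card β ^ #S := by simp

theorem card_filter_forall_imp_eq [Fintype α] [Fintype β] [DecidableEq β] (p : α → Prop)
    [DecidablePred p] (v : β) :
    #{f : α → β | ∀ x, p x → f x = v} = Fintype.card β ^ #{x | ¬ p x} := by
  have : ({f : α → β | ∀ x, p x → f x = v} : Finset _) =
      Fintype.piFinset fun x => if p x then {v} else univ := by
    ext f; simp only [mem_filter, mem_univ, true_and, Fintype.mem_piFinset]
    refine forall_congr' fun x => ?_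
    split_ifs <;> simp_all
  simp [this, Fintype.card_piFinset, apply_ite, prod_ite]

end Finset

namespace Canalizing

variable {ι : Type*} [Fintype ι] [DecidableEq ι]

def canalizedBy (i : ι) (s v : Bool) : Finset ((ι → Bool) → Bool) :=
  {f | ∀ x, x i = s → f x = v}

variable (ι) in
def canalizing : Finset ((ι → Bool) → Bool) :=
  univ.biUnion fun t : ι × Bool × Bool => canalizedBy t.1 t.2.1 t.2.2

theorem natCard_eq_card_canalizing :
    Nat.card {f : (ι → Bool) → Bool // ∃ (i : ι) (s v : Bool), ∀ x : ι → Bool, x i = s → f x = v} =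
      #(canalizing ι) := by
  rw [Nat.card_eq_fintype_card, Fintype.card_subtype]
  congr 1
  ext f
  simp [canalizing, canalizedBy]

theorem card_filter_apply_ne (i : ι) (s : Bool) :
    #{x : ι → Bool | x i ≠ s} = 2 ^ (Fintype.card ι - 1) := by
  have := Fintype.card_filter_piFinset_const_eq_of_mem (univ : Finset Bool) i (mem_univ (!s))
  rw [Fintype.piFinset_univ] at this
  simpa [Bool.eq_not_iff] using this

theorem card_canalizedBy (i : ι) (s v : Bool) :
    #(canalizedBy i s v) = 2 ^ 2 ^ (Fintype.card ι - 1) := by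
  rw [canalizedBy, card_filter_forall_imp_eq, card_filter_apply_ne, Fintype.card_bool]

theorem card_filter_apply_ne_and_apply_ne_le {i j : ι} {s s' : Bool} (h : (i, s) ≠ (j, s')) :
    #{x : ι → Bool | x i ≠ s ∧ x j ≠ s'} ≤ 2 ^ (Fintype.card ι - 2) := by
  obtain rfl | hij := eq_or_ne i j
  · have hss : s ≠ s' := by simpa using h
    have : ({x : ι → Bool | x i ≠ s ∧ x i ≠ s'} : Finset _) = ∅ := by
      ext x; cases hx : x i <;> cases s <;> cases s' <;> simp_all
    simp [this]
  · calc #{x : ι → Bool | x i ≠ s ∧ x j ≠ s'} ≤ 2 ^ #({i, j}ᶜ : Finset ι) := by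
          refine Fintype.card_bool ▸ card_le_pow_of_eqOn_compl _ _ fun x hx y hy k hk => ?_
          simp only [mem_filter, mem_univ, true_and, ← Bool.eq_not_iff] at hx hy
          simp only [coe_compl, compl_compl, coe_insert, coe_singleton, Set.mem_insert_iff,
            Set.mem_singleton_iff] at hk
          rcases hk with rfl | rfl <;> simp [hx, hy]
      _ = 2 ^ (Fintype.card ι - 2) := by rw [card_compl, card_pair hij]

theorem card_canalizedBy_inter_le {i j : ι} {s s' v v' : Bool} (h : (i, s, v) ≠ (j, s', v')) :
    #(canalizedBy i s v ∩ canalizedBy j s' v') ≤ 2 ^ 2 ^ (Fintype.card ι - 2) := by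
  by_cases hs : (i, s) = (j, s')
  · obtain ⟨rfl, rfl⟩ := Prod.ext_iff.1 hs
    have hv : v ≠ v' := by simpa using h
    have : canalizedBy i s v ∩ canalizedBy i s v' = ∅ := by
      ext f
      simp only [canalizedBy, mem_inter, mem_filter, mem_univ, true_and, notMem_empty, iff_false]
      exact fun ⟨hf, hf'⟩ => hv ((hf _ rfl).symm.trans (hf' (fun _ => s) rfl))
    simp [this]
  · calc #(canalizedBy i s v ∩ canalizedBy j s' v')
        ≤ 2 ^ #{x : ι → Bool | x i ≠ s ∧ x j ≠ s'} := by
          refine Fintype.card_bool ▸ card_le_pow_of_eqOn_compl _ _ fun f hf g hg x hx => ?_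
          simp only [canalizedBy, mem_inter, mem_filter, mem_univ, true_and] at hf hg
          simp only [coe_filter, mem_univ, true_and, Set.mem_compl_iff, Set.mem_ofPred_eq,
            not_and_or, not_not] at hx
          rcases hx with hx | hx
          · rw [hf.1 x hx, hg.1 x hx]
          · rw [hf.2 x hx, hg.2 x hx]
      _ ≤ 2 ^ 2 ^ (Fintype.card ι - 2) :=
          Nat.pow_le_pow_right two_pos (card_filter_apply_ne_and_apply_ne_le hs)

theorem card_canalizing_le : #(canalizing ι) ≤ 4 * Fintype.card ι * 2 ^ 2 ^ (Fintype.card ι - 1) :=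
  card_biUnion_le.trans_eq <| by simp [card_canalizedBy]; ring

theorem le_card_canalizing_add :
    4 * Fintype.card ι * 2 ^ 2 ^ (Fintype.card ι - 1) ≤
      #(canalizing ι) + 16 * Fintype.card ι ^ 2 * 2 ^ 2 ^ (Fintype.card ι - 2) := by
  have hpairs : ∑ t : ι × Bool × Bool, ∑ t' ∈ univ.erase t,
      #(canalizedBy t.1 t.2.1 t.2.2 ∩ canalizedBy t'.1 t'.2.1 t'.2.2) ≤
        16 * Fintype.card ι ^ 2 * 2 ^ 2 ^ (Fintype.card ι - 2) := calc
    _ ≤ ∑ t : ι × Bool × Bool, ∑ t' ∈ univ.erase t, 2 ^ 2 ^ (Fintype.card ι - 2) :=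
        sum_le_sum fun t _ => sum_le_sum fun t' ht' =>
          card_canalizedBy_inter_le (ne_of_mem_erase ht').symm
    _ ≤ ∑ t : ι × Bool × Bool, ∑ t' : ι × Bool × Bool, 2 ^ 2 ^ (Fintype.card ι - 2) :=
        sum_le_sum fun t _ => sum_le_sum_of_subset (erase_subset t univ)
    _ = 16 * Fintype.card ι ^ 2 * 2 ^ 2 ^ (Fintype.card ι - 2) := by simp; ring
  have := sum_card_le_card_biUnion_add univ
    fun t : ι × Bool × Bool => canalizedBy t.1 t.2.1 t.2.2
  simp only [card_canalizedBy, sum_const, card_univ, Fintype.card_prod, Fintype.card_bool,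
    smul_eq_mul] at this
  rw [canalizing]
  linarith

theorem two_pow_two_pow_mul_two_pow_le {n : ℕ} (hn : 2 ≤ n) :
    2 ^ 2 ^ (n - 2) * 2 ^ n ≤ 2 * 2 ^ 2 ^ (n - 1) := by
  obtain ⟨m, rfl⟩ := Nat.exists_eq_add_of_le' hn
  have : 2 ^ (m + 1) ≤ 2 ^ 2 ^ m := Nat.pow_le_pow_right two_pos Nat.lt_two_pow_self
  calc 2 ^ 2 ^ (m + 2 - 2) * 2 ^ (m + 2) = 2 * (2 ^ (m + 1) * 2 ^ 2 ^ m) := by simp; ring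
    _ ≤ 2 * (2 ^ 2 ^ m * 2 ^ 2 ^ m) := by gcongr
    _ = 2 * 2 ^ 2 ^ (m + 2 - 1) := by simp [pow_succ, pow_mul]

theorem one_sub_le_card_canalizing_div {n : ℕ} (hn : 2 ≤ n) :
    1 - 8 * ((n : ℝ) / 2 ^ n) ≤ #(canalizing (Fin n)) / (4 * n * 2 ^ 2 ^ (n - 1)) := by
  have hN : (0 : ℝ) < 4 * n * 2 ^ 2 ^ (n - 1) := by positivity
  have hlow : (4 * n * 2 ^ 2 ^ (n - 1) : ℝ) ≤
      #(canalizing (Fin n)) + 16 * n ^ 2 * 2 ^ 2 ^ (n - 2) := by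
    exact_mod_cast Fintype.card_fin n ▸ le_card_canalizing_add (ι := Fin n)
  have herr : (16 * n ^ 2 * 2 ^ 2 ^ (n - 2) : ℝ) ≤ 8 * (n / 2 ^ n) * (4 * n * 2 ^ 2 ^ (n - 1)) := by
    have h : (2 ^ 2 ^ (n - 2) * 2 ^ n : ℝ) ≤ 2 * 2 ^ 2 ^ (n - 1) := by
      exact_mod_cast two_pow_two_pow_mul_two_pow_le hn
    rw [show (8 * (n / 2 ^ n) * (4 * n * 2 ^ 2 ^ (n - 1)) : ℝ) =
      16 * n ^ 2 * (2 * 2 ^ 2 ^ (n - 1)) / 2 ^ n by ring, le_div_iff₀ (by positivity), mul_assoc]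
    exact mul_le_mul_of_nonneg_left h (by positivity)
  rw [le_div_iff₀ hN]
  linarith

theorem card_canalizing_div_le_one (n : ℕ) :
    (#(canalizing (Fin n)) : ℝ) / (4 * n * 2 ^ 2 ^ (n - 1)) ≤ 1 :=
  div_le_one_of_le₀ (by exact_mod_cast Fintype.card_fin n ▸ card_canalizing_le (ι := Fin n))
    (by positivity)

end Canalizing

open Canalizing in
theorem card_canalizing_asymptotic :
    Tendsto (fun n : ℕ =>
        (Nat.card {f : (Fin n → Bool) → Bool //
            ∃ (i : Fin n) (s v : Bool), ∀ x : Fin n → Bool, x i = s → f x = v} : ℝ) /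
          (4 * n * 2 ^ 2 ^ (n - 1)))
      atTop (nhds 1) ∧
    ∀ n : ℕ, 2 ≤ n →
      Nat.card {f : (Fin n → Bool) → Bool //
          ∃ (i : Fin n) (s v : Bool), ∀ x : Fin n → Bool, x i = s → f x = v} ≤
        4 * n * 2 ^ 2 ^ (n - 1) := by
  simp only [natCard_eq_card_canalizing]
  refine ⟨?_, fun n _ => by simpa using card_canalizing_le (ι := Fin n)⟩
  have hdecay : Tendsto (fun n : ℕ => 1 - 8 * ((n : ℝ) / 2 ^ n)) atTop (nhds 1) := by
    simpa using ((tendsto_pow_const_div_const_pow_of_one_lt 1 one_lt_two).const_mul 8).const_sub 1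
  refine tendsto_of_tendsto_of_tendsto_of_le_of_le' hdecay tendsto_const_nhds ?_
    (Eventually.of_forall card_canalizing_div_le_one)
  filter_upwards [eventually_ge_atTop 2] with n hn
  exact one_sub_le_card_canalizing_div hn
end

section
/- For n ≥ 2, the number of Boolean functions of n variables that are canalizing for exactly n variables (i.e., every variable is a canalizing variable) equals 2 + 2^{n+1}. -/
/-!
If every variable is canalizing, say `f x = v i` whenever `x i = s i`, then `f` takes the single
value `f s` at every point that agrees with `s` in some coordinate, i.e. everywhere except possibly
at the antipode `p = !s`. So `f` is constant, or it takes one value exactly at the point `p`;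
conversely all such functions qualify. With at least two variables these `2 + 2 · 2ⁿ` functions are
pairwise distinct.
-/

open Function

variable {ι : Type*}

def IsCanalizingVar (f : (ι → Bool) → Bool) (i : ι) : Prop :=
  ∃ s v : Bool, ∀ x : ι → Bool, x i = s → f x = v

open scoped Classical in
noncomputable def pointFun (b : Bool) (p : ι → Bool) : (ι → Bool) → Bool :=
  fun x => if x = p then b else !b

@[simp]
lemma pointFun_self (b : Bool) (p : ι → Bool) : pointFun b p p = b := if_pos rfl

lemma pointFun_of_ne {b : Bool} {p x : ι → Bool} (h : x ≠ p) : pointFun b p x = !b := if_neg h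

lemma isCanalizingVar_const (b : Bool) (i : ι) : IsCanalizingVar (fun _ => b) i :=
  ⟨true, b, fun _ _ => rfl⟩

lemma isCanalizingVar_pointFun (b : Bool) (p : ι → Bool) (i : ι) :
    IsCanalizingVar (pointFun b p) i :=
  ⟨!p i, !b, fun x hx => pointFun_of_ne fun hxp => by simp [hxp] at hx⟩

lemma exists_ne_ne_of_nontrivial [Nontrivial ι] (p p' : ι → Bool) : ∃ q, q ≠ p ∧ q ≠ p' := by
  classical
  have update_ne (j : ι) : update p j (!p j) ≠ p := fun h => by simpa using congrFun h j
  by_cases hpp : p = p'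
  · subst hpp
    obtain ⟨j⟩ := (inferInstance : Nonempty ι)
    exact ⟨_, update_ne j, update_ne j⟩
  · obtain ⟨i, hi⟩ := Function.ne_iff.mp hpp
    obtain ⟨j, hji⟩ := exists_ne i
    exact ⟨_, update_ne j, fun h => hi (by simpa [hji.symm] using congrFun h i)⟩

noncomputable def constOrPointFun : Bool ⊕ Bool × (ι → Bool) → (ι → Bool) → Bool :=
  Sum.elim (fun b _ => b) (fun q => pointFun q.1 q.2)

lemma constOrPointFun_injective [Nontrivial ι] : Injective (constOrPointFun (ι := ι)) := by
  have const_ne_pointFun (b b' : Bool) (p : ι → Bool) : (fun _ => b) ≠ pointFun b' p := by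
    intro h
    obtain ⟨q, hqp, -⟩ := exists_ne_ne_of_nontrivial p p
    have hp := congrFun h p
    have hq := congrFun h q
    rw [pointFun_self] at hp
    rw [pointFun_of_ne hqp, ← hp] at hq
    simp at hq
  rintro (b | ⟨b, p⟩) (b' | ⟨b', p'⟩) h <;> simp only [constOrPointFun, Sum.elim_inl,
    Sum.elim_inr] at h
  · rw [congrFun h (fun _ => true)]
  · exact (const_ne_pointFun b b' p' h).elim
  · exact (const_ne_pointFun b' b p h.symm).elim
  · obtain rfl : p = p' := by
      by_contra hpp
      obtain ⟨q, hqp, hqp'⟩ := exists_ne_ne_of_nontrivial p p'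
      have hp := congrFun h p
      have hq := congrFun h q
      rw [pointFun_self, pointFun_of_ne hpp] at hp
      rw [pointFun_of_ne hqp, pointFun_of_ne hqp', hp] at hq
      simp at hq
    simpa using congrFun h p

lemma mem_range_constOrPointFun_of_eq_off_point {f : (ι → Bool) → Bool} {p : ι → Bool} {c : Bool}
    (h : ∀ x, x ≠ p → f x = c) : f ∈ Set.range constOrPointFun := by
  by_cases hfp : f p = c
  · refine ⟨.inl c, funext fun x => ?_⟩
    by_cases hxp : x = p
    · subst hxp; exact hfp.symm
    · exact (h x hxp).symm
  · refine ⟨.inr (!c, p), funext fun x => ?_⟩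
    by_cases hxp : x = p
    · subst hxp
      simpa [constOrPointFun] using (Bool.eq_not_iff.mpr hfp).symm
    · simp [constOrPointFun, pointFun_of_ne hxp, h x hxp]

theorem range_constOrPointFun :
    Set.range (constOrPointFun (ι := ι)) = {f | ∀ i, IsCanalizingVar f i} := by
  ext f
  constructor
  · rintro ⟨b | ⟨b, p⟩, rfl⟩ i
    · exact isCanalizingVar_const b i
    · exact isCanalizingVar_pointFun b p i
  · intro hf
    choose s v hsv using hf
    refine mem_range_constOrPointFun_of_eq_off_point (p := fun i => !s i) (c := f s) fun x hx => ?_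
    obtain ⟨i, hi⟩ := Function.ne_iff.mp hx
    have hxi : x i = s i := by simpa using hi
    rw [hsv i x hxi, hsv i s rfl]

theorem card_canalizing_all_vars (n : ℕ) (hn : 2 ≤ n) :
    Nat.card {f : (Fin n → Bool) → Bool //
      ∀ i : Fin n, ∃ s v : Bool, ∀ x : Fin n → Bool, x i = s → f x = v} =
    2 + 2 ^ (n + 1) := by
  have : Nontrivial (Fin n) := Fin.nontrivial_iff_two_le.mpr hn
  calc Nat.card {f : (Fin n → Bool) → Bool // ∀ i, IsCanalizingVar f i}
      = Nat.card (Set.range (constOrPointFun (ι := Fin n))) := by rw [range_constOrPointFun]; rfl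
    _ = Nat.card (Bool ⊕ Bool × (Fin n → Bool)) :=
        Nat.card_range_of_injective constOrPointFun_injective
    _ = 2 + 2 ^ (n + 1) := by simp [pow_succ, mul_comm]
end
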